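/- Let N be a power of two, τ ∈ [0, N-1) non-integer, τ' = (N-1) - τ, and s_{I1}, s_{I2}, k ∈ {0,...,N-1}. With A_{k,1}(s,τ) = sin(π(s-k-τ)⌈τ⌉/N)/sin(π(s-k-τ)/N) and A_{k,2}(s,τ) = sin(π(s-k-τ)(N-⌈τ⌉)/N)/sin(π(s-k-τ)/N), set k' = -k-(N-1)+[s_{I1}+s_{I2}] mod N (taken mod N). Then A_{k',1}(s_{I1},τ')² = A_{k,2}(s_{I2},τ)², A_{k',2}(s_{I2},τ')² = A_{k,1}(s_{I1},τ)², and A_{k',1}(s_{I1},τ')·A_{k',2}(s_{I2},τ') = A_{k,1}(s_{I1},τ)·A_{k,2}(s_{I2},τ). -/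

import Mathlib

open Real

/-- Interference amplitude factor `A_{k,1}(s,τ) = sin(π(s-k-τ)⌈τ⌉/N)/sin(π(s-k-τ)/N)`. -/
noncomputable def A1 (N : ℕ) (τ s k : ℝ) : ℝ :=
  Real.sin (Real.pi * (s - k - τ) * (⌈τ⌉ : ℝ) / N) / Real.sin (Real.pi * (s - k - τ) / N)

/-- Interference amplitude factor `A_{k,2}(s,τ) = sin(π(s-k-τ)(N-⌈τ⌉)/N)/sin(π(s-k-τ)/N)`. -/
noncomputable def A2 (N : ℕ) (τ s k : ℝ) : ℝ :=
  Real.sin (Real.pi * (s - k - τ) * ((N : ℝ) - (⌈τ⌉ : ℝ)) / N) /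
    Real.sin (Real.pi * (s - k - τ) / N)

/-!
Both factors are the Dirichlet-type ratio `u ↦ sin(π u c / N) / sin(π u / N)` with `c = ⌈τ⌉` resp.
`c = N - ⌈τ⌉`. This ratio is even in `u`, and a shift of `u` by `m N` multiplies it by
`(-1)^(m(c-1))`. The reflection sends the argument `s_{I1} - k' - τ'` to `-(s_{I2} - k - τ) + m N`
for an integer `m` and, as `τ` is not an integer, `⌈τ'⌉ = N - ⌈τ⌉`; so the two factors are exchanged up to the signs
`(-1)^(m(N-⌈τ⌉-1))` and `(-1)^(m(⌈τ⌉-1))`, which agree because `N` is even.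
-/

noncomputable def sinRatio (N c u : ℝ) : ℝ :=
  sin (π * u * c / N) / sin (π * u / N)

lemma A1_eq_sinRatio (N : ℕ) (τ s k : ℝ) : A1 N τ s k = sinRatio N ⌈τ⌉ (s - k - τ) := rfl

lemma A2_eq_sinRatio (N : ℕ) (τ s k : ℝ) : A2 N τ s k = sinRatio N (N - ⌈τ⌉) (s - k - τ) := rfl

lemma sinRatio_neg (N c u : ℝ) : sinRatio N c (-u) = sinRatio N c u := by
  simp only [sinRatio, neg_mul, mul_neg, neg_div, sin_neg, div_neg, neg_neg]

lemma sinRatio_add_int_mul {N : ℝ} (hN : N ≠ 0) (c m : ℤ) (u : ℝ) :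
    sinRatio N c (u + m * N) = (-1) ^ (m * (c - 1)) * sinRatio N c u := by
  have hnum : π * (u + m * N) * c / N = π * u * c / N + (m * c : ℤ) * π := by
    push_cast; field_simp
  have hden : π * (u + m * N) / N = π * u / N + m * π := by
    field_simp
  rw [sinRatio, sinRatio, hnum, hden, sin_add_int_mul_pi, sin_add_int_mul_pi, mul_div_mul_comm,
    ← zpow_sub₀ (by norm_num : (-1 : ℝ) ≠ 0), mul_sub, mul_one]

lemma sinRatio_neg_add_int_mul {N : ℝ} (hN : N ≠ 0) (c m : ℤ) (u : ℝ) :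
    sinRatio N c (-u + m * N) = (-1) ^ (m * (c - 1)) * sinRatio N c u := by
  rw [sinRatio_add_int_mul hN, sinRatio_neg]

lemma Int.ceil_intCast_sub_of_notMem {R : Type*} [Ring R] [LinearOrder R] [IsStrictOrderedRing R]
    [FloorRing R] {a : R} (ha : a ∉ Set.range Int.cast) (z : ℤ) :
    ⌈(z : R) - a⌉ = z + 1 - ⌈a⌉ := by
  rw [sub_eq_add_neg, add_comm, Int.ceil_add_intCast, Int.ceil_neg,
    (Int.ceil_eq_floor_add_one_iff_notMem a).2 ha]
  ring

lemma neg_one_zpow_mul_sub_sub_one_of_even {R : Type*} [DivisionRing R] {n : ℤ} (hn : Even n) (m c : ℤ) :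
    (-1 : R) ^ (m * (n - c - 1)) = (-1) ^ (m * (c - 1)) := by
  have heven : Even (m * (n - 2 * c)) := (hn.sub (even_two_mul c)).mul_left m
  rw [show m * (n - c - 1) = m * (c - 1) + m * (n - 2 * c) by ring,
    zpow_add₀ (by norm_num), heven.neg_one_zpow, mul_one]

lemma neg_one_zpow_mul_self {R : Type*} [DivisionRing R] (e : ℤ) :
    (-1 : R) ^ e * (-1) ^ e = 1 := by
  rw [← zpow_add₀ (by norm_num), ← two_mul, zpow_mul, zpow_two, neg_one_mul, neg_neg, one_zpow]

theorem interference_amplitude_reflection_general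
    (SF N : ℕ) (hN : N = 2 ^ SF) (hSF : 1 ≤ SF)
    (τ : ℝ) (hτnotint : ∀ z : ℤ, τ ≠ (z : ℝ))
    (τ' : ℝ) (hτ' : τ' = ((N : ℝ) - 1) - τ)
    (sI1 sI2 k : ℕ)
    (k' : ℤ) (hk' : k' = (-(k : ℤ) - ((N : ℤ) - 1) + (((sI1 : ℤ) + sI2) % N)) % N) :
    (A1 N τ' (sI1 : ℝ) (k' : ℝ)) ^ 2 = (A2 N τ (sI2 : ℝ) (k : ℝ)) ^ 2 ∧
    (A2 N τ' (sI2 : ℝ) (k' : ℝ)) ^ 2 = (A1 N τ (sI1 : ℝ) (k : ℝ)) ^ 2 ∧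
    A1 N τ' (sI1 : ℝ) (k' : ℝ) * A2 N τ' (sI2 : ℝ) (k' : ℝ)
      = A1 N τ (sI1 : ℝ) (k : ℝ) * A2 N τ (sI2 : ℝ) (k : ℝ) := by
  have hNeven : Even (N : ℤ) := by
    rw [hN]; exact_mod_cast (Nat.even_pow' (by omega)).2 even_two
  have hN0 : (N : ℝ) ≠ 0 := by rw [hN]; positivity
  have hceil : (⌈τ'⌉ : ℝ) = N - ⌈τ⌉ := by
    rw [hτ', show (N : ℝ) - 1 = ((N - 1 : ℤ) : ℝ) by push_cast; ring,
      Int.ceil_intCast_sub_of_notMem (by rintro ⟨z, rfl⟩; exact hτnotint z rfl)]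
    push_cast; ring
  obtain ⟨m, hm⟩ : (N : ℤ) ∣ -k - (N - 1) + (sI1 + sI2) - k' := by
    rw [hk']
    exact ((Int.mod_modEq _ _).trans ((Int.mod_modEq _ _).add_left _)).dvd
  have hmR : (-k - (N - 1) + (sI1 + sI2) - k' : ℝ) = m * N := by
    rw [mul_comm]; exact_mod_cast hm
  have e1 : A1 N τ' sI1 k' = (-1) ^ (m * ((N - ⌈τ⌉) - 1)) * A2 N τ sI2 k := by
    rw [A1_eq_sinRatio, A2_eq_sinRatio, hceil,
      show (sI1 - k' - τ' : ℝ) = -(sI2 - k - τ) + m * N by rw [hτ']; linarith]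
    exact_mod_cast sinRatio_neg_add_int_mul hN0 (N - ⌈τ⌉) m _
  have e2 : A2 N τ' sI2 k' = (-1) ^ (m * (⌈τ⌉ - 1)) * A1 N τ sI1 k := by
    rw [A1_eq_sinRatio, A2_eq_sinRatio, hceil, sub_sub_cancel,
      show (sI2 - k' - τ' : ℝ) = -(sI1 - k - τ) + m * N by rw [hτ']; linarith]
    exact sinRatio_neg_add_int_mul hN0 ⌈τ⌉ m _
  rw [neg_one_zpow_mul_sub_sub_one_of_even hNeven] at e1
  refine ⟨?_, ?_, ?_⟩
  · rw [e1, mul_pow, sq, neg_one_zpow_mul_self, one_mul]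
  · rw [e2, mul_pow, sq, neg_one_zpow_mul_self, one_mul]
  · rw [e1, e2, mul_mul_mul_comm, neg_one_zpow_mul_self, one_mul, mul_comm]

theorem interference_amplitude_reflection
    (SF N : ℕ) (hN : N = 2 ^ SF) (hSF : 1 ≤ SF)
    (τ : ℝ) (hτ0 : 0 ≤ τ) (hτN : τ < (N : ℝ) - 1) (hτnotint : ∀ z : ℤ, τ ≠ (z : ℝ))
    (τ' : ℝ) (hτ' : τ' = ((N : ℝ) - 1) - τ)
    (sI1 sI2 k : ℕ) (hs1 : sI1 < N) (hs2 : sI2 < N) (hk : k < N)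
    (k' : ℤ) (hk' : k' = (-(k : ℤ) - ((N : ℤ) - 1) + (((sI1 : ℤ) + sI2) % N)) % N) :
    (A1 N τ' (sI1 : ℝ) (k' : ℝ)) ^ 2 = (A2 N τ (sI2 : ℝ) (k : ℝ)) ^ 2 ∧
    (A2 N τ' (sI2 : ℝ) (k' : ℝ)) ^ 2 = (A1 N τ (sI1 : ℝ) (k : ℝ)) ^ 2 ∧
    A1 N τ' (sI1 : ℝ) (k' : ℝ) * A2 N τ' (sI2 : ℝ) (k' : ℝ)
      = A1 N τ (sI1 : ℝ) (k : ℝ) * A2 N τ (sI2 : ℝ) (k : ℝ) :=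
  interference_amplitude_reflection_general SF N hN hSF τ hτnotint τ' hτ' sI1 sI2 k k' hk'
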